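/- arXiv:1105.5169 — 5 statements merged into one kernel-verified Lean document; each statement's English description precedes it below -/
import Mathlib

section
/- Let G be a locally compact Hausdorff topological group with a left Haar measure μ, and let K be a compact open subgroup of G. Let π be a continuous representation of G on a complex Banach space V, i.e., a group homomorphism from G to the continuous linear automorphisms of V such that the map (g,v) ↦ π(g)v is continuous. Then for every g ∈ G and every v ∈ V, one has μ(KgK) · ∫_K ∫_K π(k₁ g k₂) v dμ(k₂) dμ(k₁) = μ(K)² · ∫_{KgK} π(h) v dμ(h), where the integrals are Bochner integrals (all integrals exist, and 0 < μ(K) ≤ μ(KgK) < ∞ since K and KgK are compact and open). -/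
open MeasureTheory

/-- The double coset `KgK` of `g` with respect to a subgroup `K`. -/
def doubleCoset {G : Type*} [Group G] (K : Subgroup G) (g : G) : Set G :=
  {x : G | ∃ k₁ ∈ K, ∃ k₂ ∈ K, x = k₁ * g * k₂}

/-!
Let `W = {(k, h) : k ∈ K, h ∈ kgK}` and count it by rows and by columns inside `K × KgK`.
The row over `k ∈ K` is the translate `kgK`, of measure `μ K`, and integrating `f` over it gives
`∫_K f(k g k₂) dk₂`. The column over `h = agb ∈ KgK` is `{k ∈ K : h ∈ kgK}`, the left translate
by `a` of the column over `g`, so all columns have the same measure `c`. Fubini for the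
indicator of `W` gives `∫_K ∫_K f(k₁ g k₂) = c • ∫_{KgK} f`, and computing the measure of `W`
both ways gives `μ(K)² = c μ(KgK)`.
-/

open Filter Topology Set
open scoped Pointwise ENNReal

section SliceCounting

variable {X Y E : Type*} [MeasurableSpace X] [MeasurableSpace Y]
  [NormedAddCommGroup E] [NormedSpace ℝ E] {κ : Measure X} {ν : Measure Y} {W : Set (X × Y)}

theorem mul_measure_univ_eq_of_measure_slices [SFinite κ] [SFinite ν] (hW : MeasurableSet W)
    {a b : ℝ≥0∞} (ha : ∀ᵐ x ∂κ, ν (Prod.mk x ⁻¹' W) = a)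
    (hb : ∀ᵐ y ∂ν, κ ((·, y) ⁻¹' W) = b) :
    a * κ univ = b * ν univ := by
  rw [← lintegral_const, ← lintegral_const, ← lintegral_congr_ae ha, ← lintegral_congr_ae hb,
    ← Measure.prod_apply hW, ← Measure.prod_apply_symm hW]

theorem integrable_setIntegral_slice_and_integral_eq [IsFiniteMeasure κ] [SFinite ν]
    [CompleteSpace E] (hW : MeasurableSet W) {f : Y → E} (hf : Integrable f ν) {b : ℝ≥0∞}
    (hb : ∀ᵐ y ∂ν, κ ((·, y) ⁻¹' W) = b) :
    Integrable (fun x => ∫ y in Prod.mk x ⁻¹' W, f y ∂ν) κ ∧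
      ∫ x, ∫ y in Prod.mk x ⁻¹' W, f y ∂ν ∂κ = b.toReal • ∫ y, f y ∂ν := by
  set F : X × Y → E := W.indicator fun p => f p.2
  have hF : Integrable F (κ.prod ν) := (hf.comp_snd κ).indicator hW
  have hrow : ∀ x, ∫ y in Prod.mk x ⁻¹' W, f y ∂ν = ∫ y, F (x, y) ∂ν := fun x =>
    (integral_indicator (measurable_prodMk_left hW)).symm
  have hcol : ∀ᵐ y ∂ν, ∫ x, F (x, y) ∂κ = b.toReal • f y := by
    filter_upwards [hb] with y hy
    rw [← hy, ← Measure.real_def]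
    exact integral_indicator_const (f y) (measurable_prodMk_right hW)
  simp_rw [hrow]
  refine ⟨hF.integral_prod_left, ?_⟩
  rw [integral_integral_swap (f := fun x y => F (x, y)) hF, integral_congr_ae hcol, integral_smul]

end SliceCounting

theorem setIntegral_smul_set {G E : Type*} [Group G] [MeasurableSpace G] [MeasurableMul G]
    [NormedAddCommGroup E] [NormedSpace ℝ E] (μ : Measure G) [μ.IsMulLeftInvariant]
    (c : G) (s : Set G) (f : G → E) :
    ∫ x in c • s, f x ∂μ = ∫ x in s, f (c * x) ∂μ := by
  rw [← image_smul]
  exact (measurePreserving_mul_left μ c).setIntegral_image_emb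
    (MeasurableEquiv.mulLeft c).measurableEmbedding f s

/-- Open subsets of `X × Y` need not lie in the product σ-algebra on which `Measure.prod` lives;
local constancy of `s` over the compact `K` makes this set a finite union of rectangles. -/
theorem IsCompact.measurableSet_setOf_mem_of_eventuallyEq {X Y : Type*} [TopologicalSpace X]
    [MeasurableSpace X] [OpensMeasurableSpace X] [MeasurableSpace Y] {K : Set X}
    (hK : IsCompact K) (hKm : MeasurableSet K) {s : X → Set Y}
    (hs : ∀ x ∈ K, MeasurableSet (s x)) (hloc : ∀ x ∈ K, ∀ᶠ x' in 𝓝 x, s x' = s x) :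
    MeasurableSet {p : X × Y | p.1 ∈ K ∧ p.2 ∈ s p.1} := by
  choose U hUs hUo hxU using fun x (hx : x ∈ K) => eventually_nhds_iff.1 (hloc x hx)
  obtain ⟨t, ht⟩ := hK.elim_nhds_subcover' U fun x hx => (hUo x hx).mem_nhds (hxU x hx)
  have hunion : {p : X × Y | p.1 ∈ K ∧ p.2 ∈ s p.1} = ⋃ x ∈ t, (U x x.2 ∩ K) ×ˢ s x := by
    ext ⟨a, b⟩
    simp only [mem_ofPred_eq, mem_iUnion, mem_prod, mem_inter_iff, exists_prop]
    constructor
    · rintro ⟨ha, hb⟩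
      obtain ⟨x, hxt, hax⟩ := mem_iUnion₂.1 (ht ha)
      exact ⟨x, hxt, ⟨hax, ha⟩, hUs x x.2 a hax ▸ hb⟩
    · rintro ⟨x, -, ⟨hax, ha⟩, hb⟩
      exact ⟨ha, (hUs x x.2 a hax).symm ▸ hb⟩
  rw [hunion]
  exact t.measurableSet_biUnion fun x _ => ((hUo x x.2).measurableSet.inter hKm).prod (hs x x.2)

section DoubleCoset

variable {G : Type*} [Group G] (K : Subgroup G) (g : G)

theorem doubleCoset_eq_mul : doubleCoset K g = (K : Set G) * {g} * K := by
  ext x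
  exact DoubleCoset.mem_doubleCoset.symm

theorem smul_subset_doubleCoset {k : G} (hk : k ∈ K) :
    (k * g) • (K : Set G) ⊆ doubleCoset K g := by
  rintro _ ⟨k₂, hk₂, rfl⟩
  exact ⟨k, hk, k₂, hk₂, rfl⟩

def cosetIncidence : Set (G × G) := {p | p.1 ∈ K ∧ p.2 ∈ (p.1 * g) • (K : Set G)}

theorem prodMk_preimage_cosetIncidence {k : G} (hk : k ∈ K) :
    Prod.mk k ⁻¹' cosetIncidence K g = (k * g) • (K : Set G) := by
  ext h
  simp [cosetIncidence, hk]

variable {K}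

theorem measure_le_measure_doubleCoset [MeasurableSpace G] [MeasurableMul G] (μ : Measure G)
    [μ.IsMulLeftInvariant] : μ K ≤ μ (doubleCoset K g) :=
  calc μ K = μ ((1 * g) • (K : Set G)) := (measure_smul μ _ _).symm
    _ ≤ μ (doubleCoset K g) := measure_mono (smul_subset_doubleCoset K g K.one_mem)

theorem measure_cosetIncidence_column_eq [MeasurableSpace G] [MeasurableMul G] (μ : Measure G)
    [μ.IsMulLeftInvariant] {h : G} (hh : h ∈ doubleCoset K g) :
    μ ((·, h) ⁻¹' cosetIncidence K g) = μ ((·, g) ⁻¹' cosetIncidence K g) := by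
  obtain ⟨a, ha, b, hb, rfl⟩ := hh
  have htranslate : (·, a * g * b) ⁻¹' cosetIncidence K g
      = (a⁻¹ * ·) ⁻¹' ((·, g) ⁻¹' cosetIncidence K g) := by
    ext k
    have hcoset : (k * g)⁻¹ * (a * g * b) = (a⁻¹ * k * g)⁻¹ * g * b := by group
    simp only [cosetIncidence, mem_preimage, mem_ofPred_eq, mem_leftCoset_iff, hcoset,
      SetLike.mem_coe, K.mul_mem_cancel_right hb, K.mul_mem_cancel_left (K.inv_mem ha)]
  rw [htranslate, measure_preimage_mul]

variable [TopologicalSpace G] [IsTopologicalGroup G]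

theorem isOpen_doubleCoset (hK : IsOpen (K : Set G)) : IsOpen (doubleCoset K g) := by
  rw [doubleCoset_eq_mul]
  exact hK.mul_left

theorem isCompact_doubleCoset (hK : IsCompact (K : Set G)) : IsCompact (doubleCoset K g) := by
  rw [doubleCoset_eq_mul]
  exact (hK.mul isCompact_singleton).mul hK

theorem measurableSet_cosetIncidence [MeasurableSpace G] [BorelSpace G]
    (hKc : IsCompact (K : Set G)) (hKo : IsOpen (K : Set G)) :
    MeasurableSet (cosetIncidence K g) := by
  refine hKc.measurableSet_setOf_mem_of_eventuallyEq hKo.measurableSet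
    (fun k _ => (hKo.smul (k * g)).measurableSet) fun k _ => ?_
  have hcont : Continuous fun k' : G => (k' * g)⁻¹ * (k * g) := by fun_prop
  filter_upwards [hcont.continuousAt.eventually_mem (hKo.mem_nhds (by simp))] with k' hk'
  exact leftCoset_eq_iff _ |>.2 hk'

end DoubleCoset

theorem integrableOn_setIntegral_mul_mul_and_smul_integral_eq {G E : Type*} [Group G]
    [TopologicalSpace G] [IsTopologicalGroup G] [MeasurableSpace G] [BorelSpace G]
    (μ : Measure G) [μ.IsHaarMeasure]
    [NormedAddCommGroup E] [NormedSpace ℝ E] [CompleteSpace E] {K : Subgroup G}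
    (hKc : IsCompact (K : Set G)) (hKo : IsOpen (K : Set G)) {f : G → E} (hf : Continuous f)
    (g : G) :
    IntegrableOn (fun k₁ => ∫ k₂ in (K : Set G), f (k₁ * g * k₂) ∂μ) K μ ∧
      (μ (doubleCoset K g)).toReal •
          ∫ k₁ in (K : Set G), ∫ k₂ in (K : Set G), f (k₁ * g * k₂) ∂μ ∂μ
        = (μ K).toReal ^ 2 • ∫ h in doubleCoset K g, f h ∂μ := by
  set S := doubleCoset K g
  set W := cosetIncidence K g
  have hKm : MeasurableSet (K : Set G) := hKo.measurableSet
  have hSm : MeasurableSet S := (isOpen_doubleCoset g hKo).measurableSet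
  have hW : MeasurableSet W := measurableSet_cosetIncidence g hKc hKo
  have : IsFiniteMeasure (μ.restrict K) := isFiniteMeasure_restrict.2 hKc.measure_ne_top
  have : IsFiniteMeasure (μ.restrict S) :=
    isFiniteMeasure_restrict.2 (isCompact_doubleCoset g hKc).measure_ne_top
  have hrow : ∀ k ∈ K, Prod.mk k ⁻¹' W ⊆ S := fun k hk =>
    (prodMk_preimage_cosetIncidence K g hk).trans_subset (smul_subset_doubleCoset K g hk)
  have hrow_measure : ∀ᵐ k ∂μ.restrict K, μ.restrict S (Prod.mk k ⁻¹' W) = μ K := by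
    filter_upwards [ae_restrict_mem hKm] with k hk
    rw [Measure.restrict_apply' hSm, inter_eq_left.2 (hrow k hk),
      prodMk_preimage_cosetIncidence K g hk, measure_smul]
  have hrow_integral : ∀ᵐ k ∂μ.restrict K,
      ∫ h in Prod.mk k ⁻¹' W, f h ∂μ.restrict S = ∫ k₂ in (K : Set G), f (k * g * k₂) ∂μ := by
    filter_upwards [ae_restrict_mem hKm] with k hk
    rw [Measure.restrict_restrict (measurable_prodMk_left hW), inter_eq_left.2 (hrow k hk),
      prodMk_preimage_cosetIncidence K g hk, setIntegral_smul_set]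
  have hcol_measure : ∀ᵐ h ∂μ.restrict S, μ.restrict K ((·, h) ⁻¹' W) = μ ((·, g) ⁻¹' W) := by
    filter_upwards [ae_restrict_mem hSm] with h hh
    rw [Measure.restrict_apply' hKm, inter_eq_left.2 fun k hk => hk.1,
      measure_cosetIncidence_column_eq g μ hh]
  have hcount := mul_measure_univ_eq_of_measure_slices hW hrow_measure hcol_measure
  rw [Measure.restrict_apply_univ, Measure.restrict_apply_univ] at hcount
  obtain ⟨hint, heq⟩ := integrable_setIntegral_slice_and_integral_eq hW
    (hf.continuousOn.integrableOn_compact' (isCompact_doubleCoset g hKc) hSm) hcol_measure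
  refine ⟨hint.congr hrow_integral, ?_⟩
  rw [← integral_congr_ae hrow_integral, heq, smul_smul, ← ENNReal.toReal_mul, mul_comm (μ S),
    ← hcount, ENNReal.toReal_mul, ← pow_two]

theorem stmt_0_general {G : Type*} [Group G] [TopologicalSpace G] [IsTopologicalGroup G]
    [MeasurableSpace G] [BorelSpace G]
    (μ : Measure G) [μ.IsHaarMeasure]
    {V : Type*} [NormedAddCommGroup V] [NormedSpace ℂ V] [NormedSpace ℝ V]
    [CompleteSpace V]
    (K : Subgroup G) (hKcompact : IsCompact (K : Set G)) (hKopen : IsOpen (K : Set G))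
    (π : G →* (V ≃L[ℂ] V)) (hπcont : Continuous fun p : G × V => π p.1 p.2)
    (g : G) (v : V) :
    0 < μ (K : Set G) ∧
    μ (K : Set G) ≤ μ (doubleCoset K g) ∧
    μ (doubleCoset K g) < ⊤ ∧
    IntegrableOn (fun h : G => π h v) (doubleCoset K g) μ ∧
    (∀ k₁ : G, IntegrableOn (fun k₂ : G => π (k₁ * g * k₂) v) (K : Set G) μ) ∧
    IntegrableOn (fun k₁ : G => ∫ k₂ in (K : Set G), π (k₁ * g * k₂) v ∂μ) (K : Set G) μ ∧
    (μ (doubleCoset K g)).toReal •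
        (∫ k₁ in (K : Set G), ∫ k₂ in (K : Set G), π (k₁ * g * k₂) v ∂μ ∂μ)
      = ((μ (K : Set G)).toReal) ^ 2 • (∫ h in doubleCoset K g, π h v ∂μ) := by
  have hf : Continuous fun h : G => π h v := hπcont.comp (continuous_id.prodMk continuous_const)
  have hS : IsCompact (doubleCoset K g) := isCompact_doubleCoset g hKcompact
  obtain ⟨hint, heq⟩ :=
    integrableOn_setIntegral_mul_mul_and_smul_integral_eq μ hKcompact hKopen hf g
  exact ⟨hKopen.measure_pos μ ⟨1, K.one_mem⟩, measure_le_measure_doubleCoset g μ,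
    hS.measure_lt_top,
    hf.continuousOn.integrableOn_compact' hS (isOpen_doubleCoset g hKopen).measurableSet,
    fun k₁ => (hf.comp (by fun_prop)).continuousOn.integrableOn_compact' hKcompact
      hKopen.measurableSet,
    hint, heq⟩

/-- Let `G` be a locally compact Hausdorff topological group with a left Haar measure `μ`,
`K` a compact open subgroup, and `π` a continuous representation of `G` on a complex Banach
space `V`.  Then for all `g ∈ G` and `v ∈ V`:
`μ(KgK) • ∫_K ∫_K π(k₁ g k₂) v = μ(K)² • ∫_{KgK} π(h) v`,
all integrals being Bochner integrals (they all exist, and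
`0 < μ(K) ≤ μ(KgK) < ∞` since `K` and `KgK` are compact and open). -/
theorem stmt_0 {G : Type*} [Group G] [TopologicalSpace G] [IsTopologicalGroup G]
    [LocallyCompactSpace G] [T2Space G] [MeasurableSpace G] [BorelSpace G]
    (μ : Measure G) [μ.IsHaarMeasure] [μ.Regular]
    {V : Type*} [NormedAddCommGroup V] [NormedSpace ℂ V] [NormedSpace ℝ V]
    [IsScalarTower ℝ ℂ V] [CompleteSpace V]
    (K : Subgroup G) (hKcompact : IsCompact (K : Set G)) (hKopen : IsOpen (K : Set G))
    (π : G →* (V ≃L[ℂ] V)) (hπcont : Continuous fun p : G × V => π p.1 p.2)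
    (g : G) (v : V) :
    0 < μ (K : Set G) ∧
    μ (K : Set G) ≤ μ (doubleCoset K g) ∧
    μ (doubleCoset K g) < ⊤ ∧
    IntegrableOn (fun h : G => π h v) (doubleCoset K g) μ ∧
    (∀ k₁ : G, IntegrableOn (fun k₂ : G => π (k₁ * g * k₂) v) (K : Set G) μ) ∧
    IntegrableOn (fun k₁ : G => ∫ k₂ in (K : Set G), π (k₁ * g * k₂) v ∂μ) (K : Set G) μ ∧
    (μ (doubleCoset K g)).toReal •
        (∫ k₁ in (K : Set G), ∫ k₂ in (K : Set G), π (k₁ * g * k₂) v ∂μ ∂μ)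
      = ((μ (K : Set G)).toReal) ^ 2 • (∫ h in doubleCoset K g, π h v ∂μ) :=
  stmt_0_general μ K hKcompact hKopen π hπcont g v
end

section
/- Let G be a group and K a subgroup such that for every g ∈ G the double coset KgK is a finite disjoint union of left cosets of K. Let π be a ℂ-linear representation of G on a complex vector space V, and let v₀ ∈ V be a nonzero vector such that: (i) v₀ is fixed by every element of K; (ii) the vectors π(g)v₀, g ∈ G, span V; (iii) for every g ∈ G, writing KgK as a disjoint union of left cosets g₁K, …, g_nK, the vector Σ_{i=1}^n π(g_i)v₀ is a scalar multiple of v₀. Then every vector of V fixed by every element of K is a scalar multiple of v₀. -/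
/-- The left translate `aS` of a set `S` by a group element `a`. -/
def leftTranslate {G : Type*} [Group G] (a : G) (S : Set G) : Set G :=
  {x : G | ∃ s ∈ S, x = a * s}

namespace Stmt2Aux

variable {G V : Type*} [Group G] [AddCommGroup V] [Module ℂ V]

/-- The subgroup `K ∩ gKg⁻¹`, viewed as a subgroup of `K`. -/
def stab (K : Subgroup G) (g : G) : Subgroup ↥K :=
  Subgroup.comap ((MulAut.conj g⁻¹).toMonoidHom.comp K.subtype) K

lemma mem_stab {K : Subgroup G} {g : G} {k : ↥K} :
    k ∈ stab K g ↔ g⁻¹ * (k : G) * g ∈ K := by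
  simp [stab, Subgroup.mem_comap]

lemma stab_rel_iff {K : Subgroup G} {g : G} {a b : ↥K} :
    (QuotientGroup.mk a : ↥K ⧸ stab K g) = QuotientGroup.mk b ↔
      g⁻¹ * ((a : G)⁻¹ * (b : G)) * g ∈ K := by
  rw [QuotientGroup.eq, mem_stab]
  norm_num

/-- `π(a g) v₀` only depends on the class of `a` modulo `stab K g`. -/
lemma pi_eq_of_rel (K : Subgroup G) (π : G →* (V ≃ₗ[ℂ] V)) (v₀ : V)
    (hfix : ∀ k ∈ K, π k v₀ = v₀) {g : G} {a b : ↥K}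
    (h : (QuotientGroup.mk a : ↥K ⧸ stab K g) = QuotientGroup.mk b) :
    π ((a : G) * g) v₀ = π ((b : G) * g) v₀ := by
  rw [stab_rel_iff] at h
  have hb : (b : G) * g = ((a : G) * g) * (g⁻¹ * ((a : G)⁻¹ * (b : G)) * g) := by group
  have hmul : ∀ (x y : G) (w : V), π (x * y) w = π x (π y w) := by
    intro x y w; rw [map_mul]; rfl
  have : π ((b : G) * g) v₀ = π ((a : G) * g) v₀ := by
    rw [hb, hmul, hfix _ h]
  exact this.symm

lemma finite_quot (K : Subgroup G)
    (hdec : ∀ g : G, ∃ (n : ℕ) (r : Fin n → G),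
      doubleCoset K g = ⋃ i, leftTranslate (r i) (K : Set G) ∧
      ∀ i j, i ≠ j →
        Disjoint (leftTranslate (r i) (K : Set G)) (leftTranslate (r j) (K : Set G)))
    (g : G) : Finite (↥K ⧸ stab K g) := by
  obtain ⟨n, r, hun, -⟩ := hdec g
  have hmem : ∀ q : ↥K ⧸ stab K g, ∃ i, ((q.out : G) * g) ∈ leftTranslate (r i) (K : Set G) := by
    intro q
    have h1 : ((q.out : G) * g) ∈ doubleCoset K g :=
      ⟨(q.out : G), q.out.2, 1, one_mem K, by group⟩
    rw [hun] at h1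
    exact Set.mem_iUnion.mp h1
  refine Finite.of_injective (fun q => (hmem q).choose) ?_
  intro q q' h
  dsimp only at h
  obtain ⟨s, hs, hqs⟩ := (hmem q).choose_spec
  obtain ⟨s', hs', hqs'⟩ := (hmem q').choose_spec
  rw [h] at hqs
  rw [← QuotientGroup.out_eq' q, ← QuotientGroup.out_eq' q', stab_rel_iff]
  have key : g⁻¹ * (((q.out : ↥K) : G)⁻¹ * ((q'.out : ↥K) : G)) * g = s⁻¹ * s' := by
    have hr : (r ((hmem q').choose)) = ((q.out : ↥K) : G) * g * s⁻¹ := by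
      rw [hqs]; group
    rw [hr] at hqs'
    calc g⁻¹ * (((q.out : ↥K) : G)⁻¹ * ((q'.out : ↥K) : G)) * g
        = g⁻¹ * (((q.out : ↥K) : G)⁻¹ * (((q'.out : ↥K) : G) * g)) := by group
      _ = g⁻¹ * (((q.out : ↥K) : G)⁻¹ * (((q.out : ↥K) : G) * g * s⁻¹ * s')) := by rw [hqs']
      _ = s⁻¹ * s' := by group
  rw [key]
  exact mul_mem (inv_mem hs) hs'


lemma pi_mul (K : Subgroup G) (π : G →* (V ≃ₗ[ℂ] V)) (x y : G) (w : V) :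
    π (x * y) w = π x (π y w) := by rw [map_mul]; rfl

lemma eig (K : Subgroup G) (π : G →* (V ≃ₗ[ℂ] V)) (v₀ : V)
    (hfix : ∀ k ∈ K, π k v₀ = v₀)
    (heigen : ∀ (g : G) (n : ℕ) (r : Fin n → G),
      doubleCoset K g = ⋃ i, leftTranslate (r i) (K : Set G) →
      (∀ i j, i ≠ j →
        Disjoint (leftTranslate (r i) (K : Set G)) (leftTranslate (r j) (K : Set G))) →
      ∃ c : ℂ, ∑ i, π (r i) v₀ = c • v₀)
    (g : G) [Fintype (↥K ⧸ stab K g)] :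
    ∃ c : ℂ, ∑ q : ↥K ⧸ stab K g, π (((q.out : ↥K) : G) * g) v₀ = c • v₀ := by
  classical
  set e := (Fintype.equivFin (↥K ⧸ stab K g)) with he
  set r : Fin (Fintype.card (↥K ⧸ stab K g)) → G :=
    fun i => (((e.symm i).out : ↥K) : G) * g with hr
  have hout : ∀ q : ↥K ⧸ stab K g, (((q.out : ↥K)) : G) ∈ K := fun q => (q.out : ↥K).2
  have hun : doubleCoset K g = ⋃ i, leftTranslate (r i) (K : Set G) := by
    ext x
    constructor
    · rintro ⟨k₁, hk₁, k₂, hk₂, rfl⟩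
      refine Set.mem_iUnion.mpr ⟨e (QuotientGroup.mk ⟨k₁, hk₁⟩), ?_⟩
      set q := (QuotientGroup.mk (⟨k₁, hk₁⟩ : ↥K) : ↥K ⧸ stab K g) with hqdef
      have hq : (QuotientGroup.mk (q.out) : ↥K ⧸ stab K g) =
          QuotientGroup.mk (⟨k₁, hk₁⟩ : ↥K) := by
        rw [QuotientGroup.out_eq']
      rw [stab_rel_iff] at hq
      refine ⟨(g⁻¹ * (((q.out : ↥K) : G)⁻¹ * k₁) * g) * k₂, mul_mem hq hk₂, ?_⟩
      show k₁ * g * k₂ = (((e.symm (e q)).out : ↥K) : G) * g * _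
      rw [Equiv.symm_apply_apply]
      group
    · intro hx
      obtain ⟨i, hi⟩ := Set.mem_iUnion.mp hx
      obtain ⟨t, ht, rfl⟩ := hi
      exact ⟨_, hout _, t, ht, rfl⟩
  have hdisj : ∀ i j, i ≠ j →
      Disjoint (leftTranslate (r i) (K : Set G)) (leftTranslate (r j) (K : Set G)) := by
    intro i j hij
    rw [Set.disjoint_left]
    rintro x ⟨t, ht, rfl⟩ ⟨t', ht', hx⟩
    apply hij
    apply e.symm.injective
    rw [← QuotientGroup.out_eq' (e.symm i), ← QuotientGroup.out_eq' (e.symm j), stab_rel_iff]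
    have key : g⁻¹ * ((((e.symm i).out : ↥K) : G)⁻¹ * (((e.symm j).out : ↥K) : G)) * g
        = t * t'⁻¹ := by
      have h2 : (((e.symm j).out : ↥K) : G) * g = (((e.symm i).out : ↥K) : G) * g * t * t'⁻¹ := by
        simp only [hr] at hx
        apply mul_right_cancel (b := t')
        rw [← hx]
        group
      calc g⁻¹ * ((((e.symm i).out : ↥K) : G)⁻¹ * (((e.symm j).out : ↥K) : G)) * g
          = g⁻¹ * ((((e.symm i).out : ↥K) : G)⁻¹ * ((((e.symm j).out : ↥K) : G) * g)) := by group
        _ = g⁻¹ * ((((e.symm i).out : ↥K) : G)⁻¹ *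
              ((((e.symm i).out : ↥K) : G) * g * t * t'⁻¹)) := by rw [h2]
        _ = t * t'⁻¹ := by group
    rw [key]
    exact mul_mem ht (inv_mem ht')
  obtain ⟨c, hc⟩ := heigen g _ r hun hdisj
  refine ⟨c, ?_⟩
  have hsum := Equiv.sum_comp e.symm (fun q : ↥K ⧸ stab K g => π (((q.out : ↥K) : G) * g) v₀)
  rw [← hsum]
  exact hc

end Stmt2Aux

open Stmt2Aux

/-- Let `G` be a group and `K` a subgroup such that every double coset `KgK` is a finite
disjoint union of left cosets of `K`.  Let `π` be a ℂ-linear representation of `G` on a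
complex vector space `V` and `v₀ ∈ V` a nonzero vector such that: (i) `v₀` is fixed by `K`;
(ii) the vectors `π(g)v₀` span `V`; (iii) `v₀` is an eigenvector of the Hecke algebra, i.e.
for every `g` and every disjoint left coset decomposition `KgK = ⊔ gᵢK`, the vector
`∑ᵢ π(gᵢ)v₀` is a scalar multiple of `v₀`.  Then every `K`-fixed vector of `V` is a scalar
multiple of `v₀`. -/
theorem stmt_2 {G V : Type*} [Group G] [AddCommGroup V] [Module ℂ V]
    (K : Subgroup G) (π : G →* (V ≃ₗ[ℂ] V))
    (hdec : ∀ g : G, ∃ (n : ℕ) (r : Fin n → G),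
      doubleCoset K g = ⋃ i, leftTranslate (r i) (K : Set G) ∧
      ∀ i j, i ≠ j →
        Disjoint (leftTranslate (r i) (K : Set G)) (leftTranslate (r j) (K : Set G)))
    (v₀ : V) (hv₀ : v₀ ≠ 0)
    (hfix : ∀ k ∈ K, π k v₀ = v₀)
    (hspan : Submodule.span ℂ (Set.range fun g : G => π g v₀) = ⊤)
    (heigen : ∀ (g : G) (n : ℕ) (r : Fin n → G),
      doubleCoset K g = ⋃ i, leftTranslate (r i) (K : Set G) →
      (∀ i j, i ≠ j →
        Disjoint (leftTranslate (r i) (K : Set G)) (leftTranslate (r j) (K : Set G))) →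
      ∃ c : ℂ, ∑ i, π (r i) v₀ = c • v₀) :
    ∀ v : V, (∀ k ∈ K, π k v = v) → ∃ c : ℂ, v = c • v₀ := by
  classical
  intro v hvfix
  have hv : v ∈ Submodule.span ℂ (Set.range fun g : G => π g v₀) := by
    rw [hspan]; trivial
  rw [Finsupp.mem_span_range_iff_exists_finsupp] at hv
  obtain ⟨c, hc⟩ := hv
  set s : Finset G := c.support with hs
  set L : Subgroup ↥K := ⨅ g ∈ s, stab K g with hL
  have hLmem : ∀ k : ↥K, k ∈ L ↔ ∀ g ∈ s, k ∈ stab K g := by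
    intro k; simp [hL, Subgroup.mem_iInf]
  haveI hfinL : Finite (↥K ⧸ L) := by
    haveI : ∀ gs : s, Finite (↥K ⧸ stab K (gs : G)) := fun gs => finite_quot K hdec _
    refine Finite.of_injective
      (fun q : ↥K ⧸ L => fun gs : s => (QuotientGroup.mk q.out : ↥K ⧸ stab K (gs : G))) ?_
    intro q q' h
    rw [← QuotientGroup.out_eq' q, ← QuotientGroup.out_eq' q', QuotientGroup.eq]
    rw [hLmem]
    intro g hg
    have h2 := congrFun h ⟨g, hg⟩
    dsimp only at h2
    rwa [QuotientGroup.eq] at h2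
  haveI : Fintype (↥K ⧸ L) := Fintype.ofFinite _
  set N := Fintype.card (↥K ⧸ L) with hNdef
  have hN : (N : ℂ) ≠ 0 := by
    exact_mod_cast Nat.cast_ne_zero.mpr Fintype.card_ne_zero
  have key : ∀ g : G, ∃ d : ℂ,
      g ∈ s → ∑ p : ↥K ⧸ L, π (((p.out : ↥K) : G) * g) v₀ = d • v₀ := by
    intro g
    by_cases hg : g ∈ s
    · haveI : Fintype (↥K ⧸ stab K g) := @Fintype.ofFinite _ (finite_quot K hdec g)
      have hle : L ≤ stab K g := by
        intro k hk; exact (hLmem k).mp hk g hg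
      obtain ⟨d₀, hd₀⟩ := eig K π v₀ hfix heigen g
      set e := Subgroup.quotientEquivProdOfLE hle with he
      haveI : Finite ((↥K ⧸ stab K g) × (↥(stab K g) ⧸ L.subgroupOf (stab K g))) :=
        Finite.of_equiv _ e
      haveI : Finite (↥(stab K g) ⧸ L.subgroupOf (stab K g)) :=
        Finite.prod_right (↥K ⧸ stab K g)
      haveI : Fintype (↥(stab K g) ⧸ L.subgroupOf (stab K g)) := Fintype.ofFinite _
      set m := Fintype.card (↥(stab K g) ⧸ L.subgroupOf (stab K g)) with hm
      refine ⟨(m : ℂ) * d₀, fun _ => ?_⟩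
      have hfst : ∀ p : ↥K ⧸ L, (e p).1 = (QuotientGroup.mk p.out : ↥K ⧸ stab K g) := by
        intro p
        conv_lhs => rw [← QuotientGroup.out_eq' p]
        rfl
      have step1 : ∀ p : ↥K ⧸ L,
          π (((p.out : ↥K) : G) * g) v₀ = π ((((e p).1.out : ↥K) : G) * g) v₀ := by
        intro p
        refine pi_eq_of_rel K π v₀ hfix ?_
        rw [QuotientGroup.out_eq', hfst]
      calc ∑ p : ↥K ⧸ L, π (((p.out : ↥K) : G) * g) v₀
          = ∑ p : ↥K ⧸ L, π ((((e p).1.out : ↥K) : G) * g) v₀ :=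
            Finset.sum_congr rfl fun p _ => step1 p
        _ = ∑ x : (↥K ⧸ stab K g) × (↥(stab K g) ⧸ L.subgroupOf (stab K g)),
              π (((x.1.out : ↥K) : G) * g) v₀ :=
            Equiv.sum_comp e (fun x => π (((x.1.out : ↥K) : G) * g) v₀)
        _ = ∑ q : ↥K ⧸ stab K g, ∑ _h : ↥(stab K g) ⧸ L.subgroupOf (stab K g),
              π (((q.out : ↥K) : G) * g) v₀ := by rw [Fintype.sum_prod_type]
        _ = ∑ q : ↥K ⧸ stab K g, m • π (((q.out : ↥K) : G) * g) v₀ := by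
            refine Finset.sum_congr rfl fun q _ => ?_
            rw [Finset.sum_const, Finset.card_univ]
        _ = m • ∑ q : ↥K ⧸ stab K g, π (((q.out : ↥K) : G) * g) v₀ :=
            (Finset.smul_sum).symm
        _ = ((m : ℂ) * d₀) • v₀ := by
            rw [hd₀, mul_smul, Nat.cast_smul_eq_nsmul]
    · exact ⟨0, fun h => absurd h hg⟩
  choose d hd using key
  refine ⟨(N : ℂ)⁻¹ * ∑ g ∈ s, c g * d g, ?_⟩
  have main : (N : ℂ) • v = (∑ g ∈ s, c g * d g) • v₀ := by
    have l1 : (N : ℂ) • v = ∑ p : ↥K ⧸ L, π ((p.out : ↥K) : G) v := by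
      rw [Finset.sum_congr rfl fun (p : ↥K ⧸ L) _ => hvfix _ (p.out : ↥K).2]
      rw [Finset.sum_const, Finset.card_univ, Nat.cast_smul_eq_nsmul]
    have l2 : ∀ p : ↥K ⧸ L,
        π ((p.out : ↥K) : G) v = ∑ g ∈ s, c g • π (((p.out : ↥K) : G) * g) v₀ := by
      intro p
      conv_lhs => rw [← hc]
      rw [Finsupp.sum, map_sum]
      refine Finset.sum_congr rfl fun g hg => ?_
      rw [map_smul, pi_mul K π]
    calc (N : ℂ) • v = ∑ p : ↥K ⧸ L, π ((p.out : ↥K) : G) v := l1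
      _ = ∑ p : ↥K ⧸ L, ∑ g ∈ s, c g • π (((p.out : ↥K) : G) * g) v₀ :=
          Finset.sum_congr rfl fun p _ => l2 p
      _ = ∑ g ∈ s, ∑ p : ↥K ⧸ L, c g • π (((p.out : ↥K) : G) * g) v₀ := Finset.sum_comm
      _ = ∑ g ∈ s, c g • (d g • v₀) := by
          refine Finset.sum_congr rfl fun g hg => ?_
          rw [← Finset.smul_sum, hd g hg]
      _ = (∑ g ∈ s, c g * d g) • v₀ := by
          rw [Finset.sum_smul]
          exact Finset.sum_congr rfl fun g _ => (smul_smul _ _ _)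
  rw [mul_smul, ← main, smul_smul, inv_mul_cancel₀ hN, one_smul]
end

section
/- Let G be a group and K a subgroup such that for every g ∈ G the double coset KgK is a finite disjoint union of left cosets of K. Let π be a ℂ-linear representation of G on a complex vector space V such that every G-invariant subspace of V has a G-invariant complement. Let v₀ ∈ V be a nonzero vector such that: (i) v₀ is fixed by every element of K; (ii) the vectors π(g)v₀, g ∈ G, span V; (iii) for every g ∈ G, writing KgK as a disjoint union of left cosets g₁K, …, g_nK, the vector Σ_{i=1}^n π(g_i)v₀ is a scalar multiple of v₀. Then π is irreducible, i.e., the only G-invariant subspaces of V are 0 and V. -/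
/-- A subspace `W` is invariant under a representation `π` of `G` if `π(g)W ⊆ W` for all
`g ∈ G`. -/
def IsInvariantSubspace {G V : Type*} [Group G] [AddCommGroup V] [Module ℂ V]
    (π : G →* (V ≃ₗ[ℂ] V)) (W : Submodule ℂ V) : Prop :=
  ∀ g : G, ∀ v ∈ W, π g v ∈ W

open MulAction

section CosetSpace

variable {G : Type*} [Group G] {K : Subgroup G}

theorem leftTranslate_eq_preimage_mk (a : G) :
    leftTranslate a (K : Set G) = QuotientGroup.mk ⁻¹' {(a : G ⧸ K)} := by
  ext g
  simp only [leftTranslate, Set.mem_ofPred_eq, Set.mem_preimage, Set.mem_singleton_iff,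
    eq_comm (a := (g : G ⧸ K)), QuotientGroup.eq, SetLike.mem_coe]
  exact ⟨fun ⟨k, hk, hg⟩ => by rwa [hg, inv_mul_cancel_left], fun h => ⟨_, h, by group⟩⟩

theorem doubleCoset_eq_preimage_mk (x : G) :
    doubleCoset K x = QuotientGroup.mk ⁻¹' orbit K (x : G ⧸ K) := by
  ext g
  constructor
  · rintro ⟨k₁, hk₁, k₂, hk₂, rfl⟩
    refine ⟨⟨k₁, hk₁⟩, show ((k₁ * x : G) : G ⧸ K) = _ from QuotientGroup.eq.mpr ?_⟩
    rwa [inv_mul_cancel_left]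
  · rintro ⟨⟨k₁, hk₁⟩, h⟩
    replace h : (k₁ * x)⁻¹ * g ∈ K := QuotientGroup.eq.mp h
    exact ⟨k₁, hk₁, _, h, by group⟩

theorem orbit_eq_range_of_doubleCoset_eq_iUnion {x : G} {ι : Type*} {r : ι → G}
    (h : doubleCoset K x = ⋃ i, leftTranslate (r i) (K : Set G)) :
    orbit K (x : G ⧸ K) = Set.range fun i => (r i : G ⧸ K) := by
  simp only [doubleCoset_eq_preimage_mk, leftTranslate_eq_preimage_mk, ← Set.preimage_iUnion,
    Set.iUnion_singleton_eq_range] at h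
  exact Set.preimage_injective.mpr QuotientGroup.mk_surjective h

theorem injective_mk_of_pairwise_disjoint {ι : Type*} {r : ι → G}
    (h : ∀ i j, i ≠ j →
      Disjoint (leftTranslate (r i) (K : Set G)) (leftTranslate (r j) (K : Set G))) :
    Function.Injective fun i => (r i : G ⧸ K) := by
  intro i j hij
  by_contra hne
  simp only [leftTranslate_eq_preimage_mk] at h
  exact Set.disjoint_left.mp (h i j hne) hij.symm rfl

theorem finiteIndex_stabilizer_of_doubleCoset_eq_iUnion {x : G} {ι : Type*} [Finite ι]
    {r : ι → G} (h : doubleCoset K x = ⋃ i, leftTranslate (r i) (K : Set G)) :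
    (stabilizer K (x : G ⧸ K)).FiniteIndex := by
  have : Finite (orbit K (x : G ⧸ K)) := by
    rw [orbit_eq_range_of_doubleCoset_eq_iUnion h]
    exact Set.finite_range _ |>.to_subtype
  have := Finite.of_equiv _ (orbitEquivQuotientStabilizer K (x : G ⧸ K))
  exact Subgroup.finiteIndex_of_finite_quotient

end CosetSpace

theorem sum_out_smul_eq_relIndex_smul_sum_orbit {K X M : Type*} [Group K] [MulAction K X]
    [AddCommMonoid M] {H : Subgroup K} [Fintype (K ⧸ H)] {x : X}
    (hH : H ≤ stabilizer K x) {s : Finset X} (hs : (s : Set X) = orbit K x) (f : X → M) :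
    ∑ q : K ⧸ H, f (q.out • x) = H.relIndex (stabilizer K x) • ∑ y ∈ s, f y := by
  set S := stabilizer K x
  let e := Subgroup.quotientEquivProdOfLE hH
  have : Finite ((K ⧸ S) × (S ⧸ H.subgroupOf S)) := Finite.of_equiv _ e
  have : Finite (K ⧸ S) := Finite.prod_left (S ⧸ H.subgroupOf S)
  have : Finite (S ⧸ H.subgroupOf S) := Finite.prod_right (K ⧸ S)
  let : Fintype (K ⧸ S) := Fintype.ofFinite _
  let : Fintype (S ⧸ H.subgroupOf S) := Fintype.ofFinite _
  have he : ∀ q : K ⧸ H, ofQuotientStabilizer K x (e q).1 = q.out • x := fun q => by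
    conv_lhs => rw [← QuotientGroup.out_eq' q]
    exact ofQuotientStabilizer_mk K x q.out
  calc ∑ q : K ⧸ H, f (q.out • x)
      = ∑ p : (K ⧸ S) × (S ⧸ H.subgroupOf S), f (ofQuotientStabilizer K x p.1) :=
        Fintype.sum_equiv e _ _ fun q => by rw [he]
    _ = H.relIndex S • ∑ p : K ⧸ S, f (ofQuotientStabilizer K x p) := by
        rw [Fintype.sum_prod_type]
        simp only [Finset.sum_const, Finset.card_univ]
        rw [← Finset.smul_sum, Subgroup.relIndex, Subgroup.index_eq_card, Nat.card_eq_fintype_card]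
    _ = H.relIndex S • ∑ y ∈ s, f y := by
        congr 1
        refine Finset.sum_nbij (ofQuotientStabilizer K x) (fun p _ => ?_)
          (injective_ofQuotientStabilizer K x).injOn (fun y hy => ?_) fun _ _ => rfl
        · rw [← Finset.mem_coe, hs]
          induction p using QuotientGroup.induction_on with
          | H k => exact ⟨k, (ofQuotientStabilizer_mk K x k).symm⟩
        · rw [hs] at hy
          obtain ⟨k, rfl⟩ := hy
          exact ⟨k, Finset.mem_coe.mpr (Finset.mem_univ _), ofQuotientStabilizer_mk K x k⟩

section CosetSum

variable {G V : Type*} [Group G] [AddCommGroup V] [Module ℂ V] (π : G →* (V ≃ₗ[ℂ] V))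
  {K : Subgroup G}

noncomputable def cosetSum (H : Subgroup K) [Fintype (K ⧸ H)] : V →ₗ[ℂ] V :=
  ∑ q : K ⧸ H, (π (q.out : G)).toLinearMap

variable {π} {H : Subgroup K} [Fintype (K ⧸ H)]

theorem cosetSum_apply (v : V) : cosetSum π H v = ∑ q : K ⧸ H, π (q.out : G) v := by
  simp [cosetSum]

theorem IsInvariantSubspace.cosetSum_mem {U : Submodule ℂ V} (hU : IsInvariantSubspace π U)
    {v : V} (hv : v ∈ U) : cosetSum π H v ∈ U := by
  rw [cosetSum_apply]
  exact U.sum_mem fun q _ => hU _ v hv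

theorem cosetSum_apply_of_forall_fixed {v : V} (hv : ∀ k ∈ K, π k v = v) :
    cosetSum π H v = Fintype.card (K ⧸ H) • v := by
  simp only [cosetSum_apply, hv _ (Subtype.prop _), Finset.sum_const, Finset.card_univ]

theorem cosetSum_apply_eq_relIndex_smul_sum {v₀ : V} (hfix : ∀ k ∈ K, π k v₀ = v₀) {x : G}
    (hH : H ≤ stabilizer K (x : G ⧸ K)) {ι : Type*} [Fintype ι] {r : ι → G}
    (hunion : doubleCoset K x = ⋃ i, leftTranslate (r i) (K : Set G))
    (hdisj : ∀ i j, i ≠ j →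
      Disjoint (leftTranslate (r i) (K : Set G)) (leftTranslate (r j) (K : Set G))) :
    cosetSum π H (π x v₀) = H.relIndex (stabilizer K (x : G ⧸ K)) • ∑ i, π (r i) v₀ := by
  classical
  obtain ⟨f, hf⟩ : ∃ f : G ⧸ K → V, ∀ g : G, f g = π g v₀ := by
    refine ⟨Quotient.lift (fun g => π g v₀) fun a b hab => ?_, fun _ => rfl⟩
    replace hab : a⁻¹ * b ∈ K := QuotientGroup.leftRel_apply.mp hab
    rw [← mul_inv_cancel_left a b, map_mul, LinearEquiv.mul_apply, hfix _ hab]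
  calc cosetSum π H (π x v₀)
      = ∑ q : K ⧸ H, f (q.out • (x : G ⧸ K)) := by
        simp only [cosetSum_apply]
        exact Finset.sum_congr rfl fun q _ => by
          rw [show q.out • (x : G ⧸ K) = ((q.out * x : G) : G ⧸ K) from rfl, hf, map_mul,
            LinearEquiv.mul_apply]
    _ = H.relIndex (stabilizer K (x : G ⧸ K)) •
          ∑ y ∈ Finset.univ.image fun i => (r i : G ⧸ K), f y :=
        sum_out_smul_eq_relIndex_smul_sum_orbit hH (by
          rw [Finset.coe_image, Finset.coe_univ, Set.image_univ,
            orbit_eq_range_of_doubleCoset_eq_iUnion hunion]) f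
    _ = H.relIndex (stabilizer K (x : G ⧸ K)) • ∑ i, π (r i) v₀ := by
        rw [Finset.sum_image fun i _ j _ hij => injective_mk_of_pairwise_disjoint hdisj hij]
        simp only [hf]

end CosetSum

theorem mem_or_mem_of_add_eq {𝕜 V : Type*} [Field 𝕜] [AddCommGroup V] [Module 𝕜 V]
    {W W' : Submodule 𝕜 V} {A : V →ₗ[𝕜] V} (hAW : ∀ v ∈ W, A v ∈ W)
    (hAW' : ∀ v ∈ W', A v ∈ W') {v w w' : V} (hw : w ∈ W) (hw' : w' ∈ W') (hvw : w + w' = v)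
    {c : 𝕜} (hc : c ≠ 0) (hAv : A v = c • v) (hAw : A w ∈ Submodule.span 𝕜 {v}) :
    v ∈ W ∨ v ∈ W' := by
  obtain ⟨d, hd⟩ := Submodule.mem_span_singleton.mp hAw
  by_cases hd0 : d = 0
  · right
    have hAw' : A w' = c • v := by
      rw [← hAv, ← hvw, map_add, ← hd, hd0, zero_smul, zero_add]
    simpa [hAw', hc] using W'.smul_mem c⁻¹ (hAW' w' hw')
  · left
    simpa [← hd, hd0] using W.smul_mem d⁻¹ (hAW w hw)

theorem IsInvariantSubspace.eq_top_of_mem {G V : Type*} [Group G] [AddCommGroup V]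
    [Module ℂ V] {π : G →* (V ≃ₗ[ℂ] V)} {v₀ : V}
    (hspan : Submodule.span ℂ (Set.range fun g : G => π g v₀) = ⊤) {W : Submodule ℂ V}
    (hW : IsInvariantSubspace π W) (hv₀ : v₀ ∈ W) : W = ⊤ := by
  rw [eq_top_iff, ← hspan, Submodule.span_le]
  rintro _ ⟨g, rfl⟩
  exact hW g v₀ hv₀

theorem stmt_3_general {G V : Type*} [Group G] [AddCommGroup V] [Module ℂ V]
    (K : Subgroup G) (π : G →* (V ≃ₗ[ℂ] V))
    (hdec : ∀ g : G, ∃ (n : ℕ) (r : Fin n → G),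
      doubleCoset K g = ⋃ i, leftTranslate (r i) (K : Set G) ∧
      ∀ i j, i ≠ j →
        Disjoint (leftTranslate (r i) (K : Set G)) (leftTranslate (r j) (K : Set G)))
    (hcompl : ∀ W : Submodule ℂ V, IsInvariantSubspace π W →
      ∃ W' : Submodule ℂ V, IsInvariantSubspace π W' ∧ IsCompl W W')
    (v₀ : V)
    (hfix : ∀ k ∈ K, π k v₀ = v₀)
    (hspan : Submodule.span ℂ (Set.range fun g : G => π g v₀) = ⊤)
    (heigen : ∀ (g : G) (n : ℕ) (r : Fin n → G),
      doubleCoset K g = ⋃ i, leftTranslate (r i) (K : Set G) →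
      (∀ i j, i ≠ j →
        Disjoint (leftTranslate (r i) (K : Set G)) (leftTranslate (r j) (K : Set G))) →
      ∃ c : ℂ, ∑ i, π (r i) v₀ = c • v₀) :
    ∀ W : Submodule ℂ V, IsInvariantSubspace π W → W = ⊥ ∨ W = ⊤ := by
  intro W hW
  obtain ⟨W', hW', hWW'⟩ := hcompl W hW
  obtain ⟨w, hw, w', hw', hvw⟩ :=
    Submodule.mem_sup.mp (hWW'.sup_eq_top ▸ Submodule.mem_top : v₀ ∈ W ⊔ W')
  obtain ⟨a, ha⟩ := Finsupp.mem_span_range_iff_exists_finsupp.mp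
    (hspan ▸ Submodule.mem_top : w ∈ Submodule.span ℂ (Set.range fun g : G => π g v₀))
  choose n r hunion hdisj using hdec
  let H := ⨅ x ∈ a.support, stabilizer K (x : G ⧸ K)
  have : H.FiniteIndex := Subgroup.finiteIndex_iInf' _ fun x _ =>
    finiteIndex_stabilizer_of_doubleCoset_eq_iUnion (hunion x)
  let := Fintype.ofFinite (K ⧸ H)
  have hAw : cosetSum π H w ∈ Submodule.span ℂ {v₀} := by
    rw [← ha, map_finsuppSum]
    refine Submodule.finsuppSum_mem _ _ _ _ fun x hx => ?_
    obtain ⟨c, hc⟩ := heigen x _ _ (hunion x) (hdisj x)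
    have hH : H ≤ stabilizer K (x : G ⧸ K) := iInf₂_le x (Finsupp.mem_support_iff.mpr hx)
    rw [map_smul, cosetSum_apply_eq_relIndex_smul_sum hfix hH (hunion x) (hdisj x), hc]
    exact Submodule.smul_mem _ _ <| nsmul_mem (Submodule.smul_mem _ _ <|
      Submodule.mem_span_singleton_self v₀) _
  rcases mem_or_mem_of_add_eq (fun v => hW.cosetSum_mem) (fun v => hW'.cosetSum_mem) hw hw' hvw
    (Nat.cast_ne_zero.mpr Fintype.card_ne_zero)
    (by rw [cosetSum_apply_of_forall_fixed hfix, Nat.cast_smul_eq_nsmul]) hAw with hv₀ | hv₀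
  · exact Or.inr (hW.eq_top_of_mem hspan hv₀)
  · exact Or.inl (disjoint_top.mp (hW'.eq_top_of_mem hspan hv₀ ▸ hWW'.disjoint))

/-- Let `G` be a group and `K` a subgroup such that every double coset `KgK` is a finite
disjoint union of left cosets of `K`.  Let `π` be a ℂ-linear representation of `G` on a
complex vector space `V` such that every `G`-invariant subspace has a `G`-invariant
complement.  Let `v₀ ∈ V` be a nonzero vector such that: (i) `v₀` is fixed by `K`;
(ii) the vectors `π(g)v₀` span `V`; (iii) for every `g` and every disjoint left coset
decomposition `KgK = ⊔ gᵢK`, the vector `∑ᵢ π(gᵢ)v₀` is a scalar multiple of `v₀`.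
Then `π` is irreducible: the only `G`-invariant subspaces of `V` are `0` and `V`. -/
theorem stmt_3 {G V : Type*} [Group G] [AddCommGroup V] [Module ℂ V]
    (K : Subgroup G) (π : G →* (V ≃ₗ[ℂ] V))
    (hdec : ∀ g : G, ∃ (n : ℕ) (r : Fin n → G),
      doubleCoset K g = ⋃ i, leftTranslate (r i) (K : Set G) ∧
      ∀ i j, i ≠ j →
        Disjoint (leftTranslate (r i) (K : Set G)) (leftTranslate (r j) (K : Set G)))
    (hcompl : ∀ W : Submodule ℂ V, IsInvariantSubspace π W →
      ∃ W' : Submodule ℂ V, IsInvariantSubspace π W' ∧ IsCompl W W')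
    (v₀ : V) (hv₀ : v₀ ≠ 0)
    (hfix : ∀ k ∈ K, π k v₀ = v₀)
    (hspan : Submodule.span ℂ (Set.range fun g : G => π g v₀) = ⊤)
    (heigen : ∀ (g : G) (n : ℕ) (r : Fin n → G),
      doubleCoset K g = ⋃ i, leftTranslate (r i) (K : Set G) →
      (∀ i j, i ≠ j →
        Disjoint (leftTranslate (r i) (K : Set G)) (leftTranslate (r j) (K : Set G))) →
      ∃ c : ℂ, ∑ i, π (r i) v₀ = c • v₀) :
    ∀ W : Submodule ℂ V, IsInvariantSubspace π W → W = ⊥ ∨ W = ⊤ :=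
  stmt_3_general K π hdec hcompl v₀ hfix hspan heigen
end

section
/- Let 𝔤 be a Lie algebra over ℂ, V a complex vector space carrying a 𝔤-module structure and a ℂ-linear action of a group K. Call a subspace of V invariant if it is stable under both the 𝔤-action and the K-action, and assume every invariant subspace of V has an invariant complement. Suppose U ⊆ V is a nonzero K-stable subspace with the following properties: (i) V is generated by U as a 𝔤-module, i.e., V is spanned by U together with all vectors X₁⋯X_m·u with X₁,…,X_m ∈ 𝔤 and u ∈ U; (ii) U is irreducible as a representation of K, and every K-stable subspace of V that is K-equivariantly isomorphic to U is equal to U. Then V has no invariant subspaces other than 0 and V. -/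
/-!
Let `W` be invariant with invariant complement `W'`. The subspace `U ⊓ W` is `K`-stable in `U`,
so it is `0` or `U`. If it is `U`, then `W` contains `U` and is all of `V`. If it is `0`, the
projection onto `W'` along `W` is `K`-equivariant (both summands are `K`-stable) and injective
on `U`, so it carries `U` onto a `K`-stable copy of `U` inside `W'`; by multiplicity one this
copy is `U` itself, hence `W' = V` and `W = 0`.
-/

open LinearMap

theorem Submodule.commute_projection {R V : Type*} [Ring R] [AddCommGroup V] [Module R V]
    {p q : Submodule R V} (hpq : IsCompl p q) {T : V →ₗ[R] V}
    (hp : ∀ v ∈ p, T v ∈ p) (hq : ∀ v ∈ q, T v ∈ q) :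
    Commute (p.projection q hpq) T := by
  refine (isIdempotentElem_projection hpq).commute_iff.mpr ⟨?_, ?_⟩ <;>
    simpa [Module.End.mem_invtSubmodule_iff_forall_mem_of_mem]

section Equivariant

variable {R V K : Type*} [Ring R] [AddCommGroup V] [Module R V] [Monoid K]
  (ρ : K →* (V ≃ₗ[R] V))

theorem range_domRestrict_stable {f : V →ₗ[R] V} (hf : ∀ k v, f (ρ k v) = ρ k (f v))
    {U : Submodule R V} (hU : ∀ k : K, ∀ v ∈ U, ρ k v ∈ U) :
    ∀ k : K, ∀ v ∈ range (f.domRestrict U), ρ k v ∈ range (f.domRestrict U) := by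
  rintro k _ ⟨u, rfl⟩
  exact ⟨⟨ρ k u, hU k u u.2⟩, hf k u⟩

theorem le_of_isCompl_of_disjoint {U : Submodule R V} (hU : ∀ k : K, ∀ v ∈ U, ρ k v ∈ U)
    (hmult : ∀ U' : Submodule R V, (∀ k : K, ∀ v ∈ U', ρ k v ∈ U') →
      (∃ e : U ≃ₗ[R] U', ∀ (k : K) (u : U),
        (e ⟨ρ k (u : V), hU k (u : V) u.2⟩ : V) = ρ k ((e u : U') : V)) → U' = U)
    {W W' : Submodule R V} (hWk : ∀ k : K, ∀ v ∈ W, ρ k v ∈ W)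
    (hW'k : ∀ k : K, ∀ v ∈ W', ρ k v ∈ W') (hc : IsCompl W W') (hUW : Disjoint U W) :
    U ≤ W' := by
  set g := W'.projection W hc.symm
  have hg : ∀ k v, g (ρ k v) = ρ k (g v) := fun k v =>
    LinearMap.congr_fun (Submodule.commute_projection hc.symm (hW'k k) (hWk k)).eq v
  have hinj : Function.Injective (g.domRestrict U) :=
    injective_domRestrict_iff.mpr (by rwa [Submodule.ker_projection])
  have hcopy : range (g.domRestrict U) = U :=
    hmult _ (range_domRestrict_stable ρ hg hU) ⟨LinearEquiv.ofInjective _ hinj, fun k u => hg k u⟩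
  calc U = range (g.domRestrict U) := hcopy.symm
    _ ≤ range g := range_domRestrict_le_range g U
    _ = W' := Submodule.range_projection _

end Equivariant

theorem stmt_5_general {𝔤 V K : Type*} [LieRing 𝔤] [LieAlgebra ℂ 𝔤]
    [AddCommGroup V] [Module ℂ V] [LieRingModule 𝔤 V] [LieModule ℂ 𝔤 V]
    [Group K] (ρ : K →* (V ≃ₗ[ℂ] V))
    (hcompl : ∀ W : Submodule ℂ V,
      (∀ X : 𝔤, ∀ v ∈ W, ⁅X, v⁆ ∈ W) → (∀ k : K, ∀ v ∈ W, ρ k v ∈ W) →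
      ∃ W' : Submodule ℂ V,
        ((∀ X : 𝔤, ∀ v ∈ W', ⁅X, v⁆ ∈ W') ∧ (∀ k : K, ∀ v ∈ W', ρ k v ∈ W')) ∧
        IsCompl W W')
    (U : Submodule ℂ V)
    (hUstab : ∀ k : K, ∀ v ∈ U, ρ k v ∈ U)
    -- (i) `V` is generated by `U` as a `𝔤`-module:
    (hgen : ∀ W : Submodule ℂ V, U ≤ W → (∀ X : 𝔤, ∀ v ∈ W, ⁅X, v⁆ ∈ W) → W = ⊤)
    -- (ii) `U` is irreducible as a `K`-representation ...
    (hUirr : ∀ W ≤ U, (∀ k : K, ∀ v ∈ W, ρ k v ∈ W) → W = ⊥ ∨ W = U)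
    -- ... and every `K`-stable subspace of `V` `K`-equivariantly isomorphic to `U` is `U`:
    (hmult : ∀ U' : Submodule ℂ V, (∀ k : K, ∀ v ∈ U', ρ k v ∈ U') →
      (∃ e : U ≃ₗ[ℂ] U', ∀ (k : K) (u : U),
        (e ⟨ρ k (u : V), hUstab k (u : V) u.2⟩ : V) = ρ k ((e u : U') : V)) → U' = U) :
    ∀ W : Submodule ℂ V,
      (∀ X : 𝔤, ∀ v ∈ W, ⁅X, v⁆ ∈ W) → (∀ k : K, ∀ v ∈ W, ρ k v ∈ W) →
      W = ⊥ ∨ W = ⊤ := by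
  intro W hWg hWk
  obtain ⟨W', ⟨hW'g, hW'k⟩, hc⟩ := hcompl W hWg hWk
  rcases hUirr (U ⊓ W) inf_le_left (fun k v hv => ⟨hUstab k v hv.1, hWk k v hv.2⟩)
    with hUW | hUW
  · have hUW' : U ≤ W' :=
      le_of_isCompl_of_disjoint ρ hUstab hmult hWk hW'k hc (disjoint_iff.mpr hUW)
    left
    exact eq_bot_of_isCompl_top (hgen W' hUW' hW'g ▸ hc)
  · right
    exact hgen W (inf_eq_left.mp hUW) hWg

/-- Let `𝔤` be a Lie algebra over ℂ and `V` a complex vector space carrying a `𝔤`-module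
structure and a ℂ-linear action of a group `K` (no compatibility assumed).  A subspace is
invariant if stable under both actions; assume every invariant subspace has an invariant
complement.  Suppose `U ⊆ V` is a nonzero `K`-stable subspace such that: (i) `V` is
generated by `U` as a `𝔤`-module; (ii) `U` is irreducible as a `K`-representation, and
every `K`-stable subspace of `V` that is `K`-equivariantly isomorphic to `U` equals `U`
(the `K`-type `U` occurs exactly once).  Then `V` has no invariant subspaces other than
`0` and `V`. -/
theorem stmt_5 {𝔤 V K : Type*} [LieRing 𝔤] [LieAlgebra ℂ 𝔤]
    [AddCommGroup V] [Module ℂ V] [LieRingModule 𝔤 V] [LieModule ℂ 𝔤 V]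
    [Group K] (ρ : K →* (V ≃ₗ[ℂ] V))
    (hcompl : ∀ W : Submodule ℂ V,
      (∀ X : 𝔤, ∀ v ∈ W, ⁅X, v⁆ ∈ W) → (∀ k : K, ∀ v ∈ W, ρ k v ∈ W) →
      ∃ W' : Submodule ℂ V,
        ((∀ X : 𝔤, ∀ v ∈ W', ⁅X, v⁆ ∈ W') ∧ (∀ k : K, ∀ v ∈ W', ρ k v ∈ W')) ∧
        IsCompl W W')
    (U : Submodule ℂ V) (hUne : U ≠ ⊥)
    (hUstab : ∀ k : K, ∀ v ∈ U, ρ k v ∈ U)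
    -- (i) `V` is generated by `U` as a `𝔤`-module:
    (hgen : ∀ W : Submodule ℂ V, U ≤ W → (∀ X : 𝔤, ∀ v ∈ W, ⁅X, v⁆ ∈ W) → W = ⊤)
    -- (ii) `U` is irreducible as a `K`-representation ...
    (hUirr : ∀ W ≤ U, (∀ k : K, ∀ v ∈ W, ρ k v ∈ W) → W = ⊥ ∨ W = U)
    -- ... and every `K`-stable subspace of `V` `K`-equivariantly isomorphic to `U` is `U`:
    (hmult : ∀ U' : Submodule ℂ V, (∀ k : K, ∀ v ∈ U', ρ k v ∈ U') →
      (∃ e : U ≃ₗ[ℂ] U', ∀ (k : K) (u : U),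
        (e ⟨ρ k (u : V), hUstab k (u : V) u.2⟩ : V) = ρ k ((e u : U') : V)) → U' = U) :
    ∀ W : Submodule ℂ V,
      (∀ X : 𝔤, ∀ v ∈ W, ⁅X, v⁆ ∈ W) → (∀ k : K, ∀ v ∈ W, ρ k v ∈ W) →
      W = ⊥ ∨ W = ⊤ :=
  stmt_5_general ρ hcompl U hUstab hgen hUirr hmult
end

section
/- Let 𝔤 be a Lie algebra over ℂ admitting a vector space direct sum decomposition 𝔤 = 𝔭⁺ ⊕ 𝔨 ⊕ 𝔭⁻, where 𝔨, 𝔭⁺, 𝔭⁻ are Lie subalgebras with [𝔨,𝔭⁺] ⊆ 𝔭⁺ and [𝔨,𝔭⁻] ⊆ 𝔭⁻ (so that 𝔮 := 𝔨 ⊕ 𝔭⁻ is a Lie subalgebra). Let V be a 𝔤-module such that every 𝔤-submodule of V has a 𝔤-submodule complement, and let v₀ ∈ V be a nonzero vector with the following properties: (i) V is generated by v₀ as a 𝔤-module; (ii) the 𝔨-submodule τ of V generated by v₀ is irreducible as a 𝔨-module; (iii) 𝔭⁻·v₀ = 0; (iv) viewing τ as a 𝔮-module on which 𝔭⁻ acts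 by zero, the induced 𝔤-module L_τ := U(𝔤) ⊗_{U(𝔮)} τ is a semisimple 𝔨-module and dim_ℂ Hom_𝔨(τ, L_τ) = 1. Then V is irreducible as a 𝔤-module. -/
/-!
Let `W` be a `𝔤`-submodule of `V` with `𝔤`-stable complement `W'`; the projection `p` onto `W`
along `W'` is then `𝔤`-equivariant. The universal property of `L_τ` gives a `𝔤`-map
`π : L_τ → V` extending the inclusion `τ ⊆ V` (as `𝔭⁻` kills `v₀` and `𝔨` normalizes `𝔭⁻`,
it kills `τ`); `π` is onto because `v₀` generates `V`, and since `L_τ` is a semisimple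
`𝔨`-module, `π` has a `𝔨`-equivariant section `σ`. Now `σ ∘ p|_τ` and `σ|_τ` both lie in the
line `Hom_𝔨(τ, L_τ)`, so after applying `π` the vectors `p v₀` and `v₀` lie on a common line.
Hence `v₀ ∈ W` or `v₀ ∈ W'`, and as `v₀` generates `V`, `W = V` or `W = 0`.
-/

/- The universal property of `L_τ` only applies to targets in `Type (max u v)`, so it is used
with `ULift V`. -/
namespace ULift

variable {L M : Type*} [LieRing L] [AddCommGroup M] [LieRingModule L M]

instance instLieRingModule : LieRingModule L (ULift.{u} M) where
  bracket x m := up ⁅x, m.down⁆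
  add_lie x y m := congrArg up (add_lie x y m.down)
  lie_add x m n := congrArg up (lie_add x m.down n.down)
  leibniz_lie x y m := congrArg up (leibniz_lie x y m.down)

instance instLieModule {R : Type*} [CommRing R] [LieAlgebra R L] [Module R M] [LieModule R L M] :
    LieModule R L (ULift.{u} M) where
  smul_lie c x m := congrArg up (smul_lie c x m.down)
  lie_smul c x m := congrArg up (lie_smul c x m.down)

end ULift

theorem complementedLattice_of_iSup_eq_top_of_isAtom {α ι : Type*} [CompleteLattice α]
    [IsModularLattice α] [IsCompactlyGenerated α] {C : ι → α} (hC : ∀ i, IsAtom (C i))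
    (h : ⨆ i, C i = ⊤) : ComplementedLattice α :=
  complementedLattice_of_sSup_atoms_eq_top <| top_le_iff.1 <| h ▸ iSup_le fun i ↦ le_sSup (hC i)

theorem Submodule.mem_or_mem_of_projection_eq_smul {K V : Type*} [Field K] [AddCommGroup V]
    [Module K V] {W W' : Submodule K V} (h : IsCompl W W') {v u : V} {a b : K}
    (hp : W.projection W' h v = a • u) (hv : v = b • u) : v ∈ W ∨ v ∈ W' := by
  by_cases ha : a = 0
  · right
    rwa [ha, zero_smul, projection_apply_eq_zero_iff] at hp
  · left
    have hu : u ∈ W := (W.smul_mem_iff ha).1 (hp ▸ projection_apply_mem h v)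
    exact hv ▸ W.smul_mem b hu

section

variable {R L M N : Type*} [CommRing R] [LieRing L] [AddCommGroup M] [Module R M]
  [LieRingModule L M]

theorem Submodule.projection_lie {W W' : Submodule R M} (h : IsCompl W W')
    (hW : ∀ X : L, ∀ w ∈ W, ⁅X, w⁆ ∈ W) (hW' : ∀ X : L, ∀ w ∈ W', ⁅X, w⁆ ∈ W') (X : L) (v : M) :
    W.projection W' h ⁅X, v⁆ = ⁅X, W.projection W' h v⁆ := by
  conv_lhs => rw [← add_sub_cancel (W.projection W' h v) v, lie_add, map_add,
    projection_apply_of_mem_left h (hW X _ (projection_apply_mem h v)),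
    projection_apply_of_mem_right h (hW' X _ (sub_projection_mem h v)), add_zero]

theorem LieModuleHom.exists_rightInverse_of_surjective [AddCommGroup N] [Module R N]
    [LieRingModule L N] [ComplementedLattice (LieSubmodule R L M)] (f : M →ₗ⁅R,L⁆ N)
    (hf : Function.Surjective f) : ∃ g : N →ₗ⁅R,L⁆ M, ∀ n, f (g n) = n := by
  obtain ⟨S, hS⟩ := exists_isCompl f.ker
  rw [← LieSubmodule.isCompl_toSubmodule] at hS
  have hinj : Set.InjOn f S := fun a ha b hb hab ↦ by
    have : a - b ∈ (f.ker : Submodule R M) ⊓ S := ⟨by simp [hab], Submodule.sub_mem _ ha hb⟩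
    rwa [hS.inf_eq_bot, Submodule.mem_bot, sub_eq_zero] at this
  have hsurj : ∀ n, ∃ s ∈ S, f s = n := fun n ↦ by
    obtain ⟨m, rfl⟩ := hf n
    obtain ⟨k, hk, s, hs, rfl⟩ :=
      Submodule.mem_sup.1 (hS.sup_eq_top ▸ Submodule.mem_top (x := m))
    exact ⟨s, hs, by simp [(LieModuleHom.mem_ker).1 hk]⟩
  choose g hgS hfg using hsurj
  refine ⟨{ toFun := g
            map_add' := fun n n' ↦ hinj (hgS _) (S.add_mem (hgS n) (hgS n')) (by simp [hfg])
            map_smul' := fun c n ↦ hinj (hgS _) (S.smul_mem c (hgS n)) (by simp [hfg])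
            map_lie' := fun {x n} ↦ hinj (hgS _) (S.lie_mem (hgS n)) (by simp [hfg]) }, hfg⟩

variable [LieAlgebra R L]

theorem LieSubalgebra.complementedLattice_of_iSup_eq_top (𝔨 : LieSubalgebra R L) {ι : Type*}
    {C : ι → Submodule R M}
    (hC : ∀ i, (∀ X ∈ 𝔨, ∀ w ∈ C i, ⁅X, w⁆ ∈ C i) ∧ C i ≠ ⊥ ∧
      ∀ W ≤ C i, (∀ X ∈ 𝔨, ∀ w ∈ W, ⁅X, w⁆ ∈ W) → W = ⊥ ∨ W = C i)
    (h : iSup C = ⊤) : ComplementedLattice (LieSubmodule R 𝔨 M) := by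
  let C' (i : ι) : LieSubmodule R 𝔨 M :=
    { C i with lie_mem := fun {x _} hm ↦ (hC i).1 x x.2 _ hm }
  refine complementedLattice_of_iSup_eq_top_of_isAtom (C := C') (fun i ↦ ⟨?_, fun N hN ↦ ?_⟩) ?_
  · exact fun h0 ↦ (hC i).2.1 ((LieSubmodule.toSubmodule_eq_bot (C' i)).2 h0)
  · have hle : (N : Submodule R M) ≤ C i := (LieSubmodule.toSubmodule_le_toSubmodule _ _).2 hN.le
    rcases (hC i).2.2 N hle fun X hX w hw ↦ N.lie_mem (x := ⟨X, hX⟩) hw with hN' | hN'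
    · exact (LieSubmodule.toSubmodule_eq_bot _).1 hN'
    · exact absurd (LieSubmodule.toSubmodule_injective hN') hN.ne
  · rw [← LieSubmodule.toSubmodule_eq_top, LieSubmodule.iSup_toSubmodule]
    exact h

variable [LieModule R L M]

theorem LieModule.lie_mem_maxTrivSubmodule {𝔭 : LieSubalgebra R L} {X : L}
    (hX : ∀ Y ∈ 𝔭, ⁅X, Y⁆ ∈ 𝔭) {m : M} (hm : m ∈ maxTrivSubmodule R 𝔭 M) :
    ⁅X, m⁆ ∈ maxTrivSubmodule R 𝔭 M := by
  rw [mem_maxTrivSubmodule] at hm ⊢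
  intro Y
  have hYX : ⁅⁅(Y : L), X⁆, m⁆ = 0 := hm ⟨_, lie_skew (Y : L) X ▸ neg_mem (hX Y Y.2)⟩
  rw [LieSubalgebra.coe_bracket_of_module, leibniz_lie, hYX, ← LieSubalgebra.coe_bracket_of_module,
    hm, lie_zero, add_zero]

end

theorem stmt_7_general {𝔤 : Type u} [LieRing 𝔤] [LieAlgebra ℂ 𝔤]
    (𝔨 𝔭m : LieSubalgebra ℂ 𝔤)
    (hkm : ∀ X ∈ 𝔨, ∀ Y ∈ 𝔭m, ⁅X, Y⁆ ∈ 𝔭m)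
    {V : Type v} [AddCommGroup V] [Module ℂ V] [LieRingModule 𝔤 V] [LieModule ℂ 𝔤 V]
    -- every `𝔤`-submodule of `V` has a `𝔤`-submodule complement:
    (hcompl : ∀ W : Submodule ℂ V, (∀ X : 𝔤, ∀ w ∈ W, ⁅X, w⁆ ∈ W) →
      ∃ W' : Submodule ℂ V, (∀ X : 𝔤, ∀ w ∈ W', ⁅X, w⁆ ∈ W') ∧ IsCompl W W')
    (v₀ : V)
    -- (i) `V` is generated by `v₀` as a `𝔤`-module:
    (hgen : ∀ W : Submodule ℂ V, v₀ ∈ W → (∀ X : 𝔤, ∀ w ∈ W, ⁅X, w⁆ ∈ W) → W = ⊤)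
    -- `τ` is the `𝔨`-submodule of `V` generated by `v₀`:
    (τ : Submodule ℂ V) (hv₀τ : v₀ ∈ τ)
    (hτstab : ∀ X ∈ 𝔨, ∀ w ∈ τ, ⁅X, w⁆ ∈ τ)
    (hτmin : ∀ W : Submodule ℂ V, v₀ ∈ W → (∀ X ∈ 𝔨, ∀ w ∈ W, ⁅X, w⁆ ∈ W) → τ ≤ W)
    -- (iii) `𝔭⁻ · v₀ = 0`:
    (hann : ∀ Y ∈ 𝔭m, ⁅Y, v₀⁆ = 0)
    -- `L` is the induced `𝔤`-module `L_τ = U(𝔤) ⊗_{U(𝔮)} τ`; `ι : τ → L_τ`, `t ↦ 1 ⊗ t`,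
    -- is `𝔨`-equivariant, `𝔭⁻` kills `ι(τ)`, and `(L, ι)` has the universal property
    -- `Hom_𝔤(L_τ, M) ≅ Hom_𝔮(τ, M)` characterizing the induced module:
    (L : Type (max u v)) [AddCommGroup L] [Module ℂ L] [LieRingModule 𝔤 L] [LieModule ℂ 𝔤 L]
    (ι : τ →ₗ[ℂ] L)
    (huniv : ∀ (M : Type (max u v)) [AddCommGroup M] [Module ℂ M]
        [LieRingModule 𝔤 M] [LieModule ℂ 𝔤 M],
      ∀ f : τ →ₗ[ℂ] M,
        (∀ (X : 𝔤) (hX : X ∈ 𝔨) (t : τ),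
          f ⟨⁅X, (t : V)⁆, hτstab X hX (t : V) t.2⟩ = ⁅X, f t⁆) →
        (∀ Y ∈ 𝔭m, ∀ t : τ, ⁅Y, f t⁆ = 0) →
        ∃! F : L →ₗ[ℂ] M, (∀ (X : 𝔤) (x : L), F ⁅X, x⁆ = ⁅X, F x⁆) ∧ F ∘ₗ ι = f)
    -- (iv) `L_τ` is a semisimple `𝔨`-module (a sum of irreducible `𝔨`-submodules) ...
    (hss : ∃ (I : Type (max u v)) (C : I → Submodule ℂ L),
      (∀ i, (∀ X ∈ 𝔨, ∀ w ∈ C i, ⁅X, w⁆ ∈ C i) ∧ C i ≠ ⊥ ∧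
        ∀ W ≤ C i, (∀ X ∈ 𝔨, ∀ w ∈ W, ⁅X, w⁆ ∈ W) → W = ⊥ ∨ W = C i) ∧
      iSup C = ⊤)
    -- ... and `dim_ℂ Hom_𝔨(τ, L_τ) = 1`:
    (hmult : ∃ f₀ : τ →ₗ[ℂ] L, f₀ ≠ 0 ∧
      (∀ (X : 𝔤) (hX : X ∈ 𝔨) (t : τ),
        f₀ ⟨⁅X, (t : V)⁆, hτstab X hX (t : V) t.2⟩ = ⁅X, f₀ t⁆) ∧
      ∀ f : τ →ₗ[ℂ] L,
        (∀ (X : 𝔤) (hX : X ∈ 𝔨) (t : τ),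
          f ⟨⁅X, (t : V)⁆, hτstab X hX (t : V) t.2⟩ = ⁅X, f t⁆) →
        ∃ c : ℂ, f = c • f₀) :
    -- conclusion: `V` is irreducible as a `𝔤`-module
    ∀ W : Submodule ℂ V, (∀ X : 𝔤, ∀ w ∈ W, ⁅X, w⁆ ∈ W) → W = ⊥ ∨ W = ⊤ := by
  intro W hW
  obtain ⟨W', hW', hWW'⟩ := hcompl W hW
  have hτann : ∀ Y ∈ 𝔭m, ∀ t : τ, ⁅Y, (t : V)⁆ = 0 := by
    have hτtriv := hτmin _ ((LieModule.mem_maxTrivSubmodule ℂ 𝔭m V v₀).2 fun Y ↦ hann Y Y.2)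
      fun X hX _ hw ↦ LieModule.lie_mem_maxTrivSubmodule (hkm X hX) hw
    exact fun Y hY t ↦ (LieModule.mem_maxTrivSubmodule ℂ 𝔭m V _).1 (hτtriv t.2) ⟨Y, hY⟩
  obtain ⟨F, ⟨hFlie, hFι⟩, -⟩ := huniv (ULift.{u} V)
    (ULift.moduleEquiv.symm.toLinearMap ∘ₗ τ.subtype) (fun _ _ _ ↦ rfl)
    fun Y hY t ↦ congrArg ULift.up (hτann Y hY t)
  let π : L →ₗ⁅ℂ,𝔤⁆ V :=
    { ULift.moduleEquiv.toLinearMap ∘ₗ F with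
      map_lie' := fun {X x} ↦ congrArg ULift.down (hFlie X x) }
  have hπι : ∀ t, π (ι t) = t := fun t ↦ congrArg ULift.down (LinearMap.congr_fun hFι t)
  have hπ : Function.Surjective π := π.range_eq_top.1 <| (LieSubmodule.toSubmodule_eq_top _).1 <|
    hgen _ ⟨ι ⟨v₀, hv₀τ⟩, hπι _⟩ fun _ _ hw ↦ π.range.lie_mem hw
  obtain ⟨I, C, hC, hCsup⟩ := hss
  have := 𝔨.complementedLattice_of_iSup_eq_top hC hCsup
  obtain ⟨σ, hσ⟩ : ∃ σ : V →ₗ⁅ℂ,𝔨⁆ L, ∀ v, π (σ v) = v :=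
    (π.restrictLie 𝔨).exists_rightInverse_of_surjective hπ
  have hσ𝔨 : ∀ X ∈ 𝔨, ∀ v, σ ⁅X, v⁆ = ⁅X, σ v⁆ := fun X hX v ↦ σ.map_lie ⟨X, hX⟩ v
  set p := W.projection W' hWW'
  obtain ⟨f₀, -, -, hf₀⟩ := hmult
  obtain ⟨a, ha⟩ := hf₀ ((σ : V →ₗ[ℂ] L) ∘ₗ p ∘ₗ τ.subtype) fun X hX t ↦ by
    simp [p, Submodule.projection_lie hWW' hW hW', hσ𝔨 X hX]
  obtain ⟨b, hb⟩ := hf₀ ((σ : V →ₗ[ℂ] L) ∘ₗ τ.subtype) fun X hX t ↦ hσ𝔨 X hX t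
  have hpv : p v₀ = a • π (f₀ ⟨v₀, hv₀τ⟩) := by
    simpa [hσ] using congrArg π (LinearMap.congr_fun ha ⟨v₀, hv₀τ⟩)
  have hv : v₀ = b • π (f₀ ⟨v₀, hv₀τ⟩) := by
    simpa [hσ] using congrArg π (LinearMap.congr_fun hb ⟨v₀, hv₀τ⟩)
  rcases Submodule.mem_or_mem_of_projection_eq_smul hWW' hpv hv with h | h
  · exact Or.inr (hgen W h hW)
  · exact Or.inl (eq_bot_of_isCompl_top (hgen W' h hW' ▸ hWW'))

/-- Let `𝔤 = 𝔭⁺ ⊕ 𝔨 ⊕ 𝔭⁻` be a Lie algebra over ℂ with `[𝔨,𝔭^±] ⊆ 𝔭^±`, and let `V` be a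
`𝔤`-module in which every `𝔤`-submodule has a `𝔤`-submodule complement.  Let `v₀ ∈ V` be a
nonzero vector such that: (i) `V` is generated by `v₀` as a `𝔤`-module; (ii) the
`𝔨`-submodule `τ` of `V` generated by `v₀` is irreducible; (iii) `𝔭⁻·v₀ = 0`; (iv) the
induced module `L_τ = U(𝔤) ⊗_{U(𝔮)} τ` (with `𝔮 = 𝔨 ⊕ 𝔭⁻` acting on `τ` through `𝔨`,
`𝔭⁻` acting by zero) — characterized below by its universal property
`Hom_𝔤(L_τ, M) ≅ Hom_𝔮(τ, M)` — is a semisimple `𝔨`-module containing the `𝔨`-type `τ`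
exactly once, i.e. `dim_ℂ Hom_𝔨(τ, L_τ) = 1`.  Then `V` is irreducible as a `𝔤`-module. -/
theorem stmt_7 {𝔤 : Type u} [LieRing 𝔤] [LieAlgebra ℂ 𝔤]
    (𝔨 𝔭p 𝔭m : LieSubalgebra ℂ 𝔤)
    -- `𝔤 = 𝔭⁺ ⊕ 𝔨 ⊕ 𝔭⁻` as vector spaces:
    (hsup : (𝔭p : Submodule ℂ 𝔤) ⊔ (𝔨 : Submodule ℂ 𝔤) ⊔ (𝔭m : Submodule ℂ 𝔤) = ⊤)
    (hind₁ : (𝔭p : Submodule ℂ 𝔤) ⊓ ((𝔨 : Submodule ℂ 𝔤) ⊔ (𝔭m : Submodule ℂ 𝔤)) = ⊥)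
    (hind₂ : (𝔨 : Submodule ℂ 𝔤) ⊓ (𝔭m : Submodule ℂ 𝔤) = ⊥)
    (hkp : ∀ X ∈ 𝔨, ∀ Y ∈ 𝔭p, ⁅X, Y⁆ ∈ 𝔭p)
    (hkm : ∀ X ∈ 𝔨, ∀ Y ∈ 𝔭m, ⁅X, Y⁆ ∈ 𝔭m)
    {V : Type v} [AddCommGroup V] [Module ℂ V] [LieRingModule 𝔤 V] [LieModule ℂ 𝔤 V]
    -- every `𝔤`-submodule of `V` has a `𝔤`-submodule complement:
    (hcompl : ∀ W : Submodule ℂ V, (∀ X : 𝔤, ∀ w ∈ W, ⁅X, w⁆ ∈ W) →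
      ∃ W' : Submodule ℂ V, (∀ X : 𝔤, ∀ w ∈ W', ⁅X, w⁆ ∈ W') ∧ IsCompl W W')
    (v₀ : V) (hv₀ : v₀ ≠ 0)
    -- (i) `V` is generated by `v₀` as a `𝔤`-module:
    (hgen : ∀ W : Submodule ℂ V, v₀ ∈ W → (∀ X : 𝔤, ∀ w ∈ W, ⁅X, w⁆ ∈ W) → W = ⊤)
    -- `τ` is the `𝔨`-submodule of `V` generated by `v₀`:
    (τ : Submodule ℂ V) (hv₀τ : v₀ ∈ τ)
    (hτstab : ∀ X ∈ 𝔨, ∀ w ∈ τ, ⁅X, w⁆ ∈ τ)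
    (hτmin : ∀ W : Submodule ℂ V, v₀ ∈ W → (∀ X ∈ 𝔨, ∀ w ∈ W, ⁅X, w⁆ ∈ W) → τ ≤ W)
    -- (ii) `τ` is irreducible as a `𝔨`-module:
    (hτne : τ ≠ ⊥)
    (hτirr : ∀ W ≤ τ, (∀ X ∈ 𝔨, ∀ w ∈ W, ⁅X, w⁆ ∈ W) → W = ⊥ ∨ W = τ)
    -- (iii) `𝔭⁻ · v₀ = 0`:
    (hann : ∀ Y ∈ 𝔭m, ⁅Y, v₀⁆ = 0)
    -- `L` is the induced `𝔤`-module `L_τ = U(𝔤) ⊗_{U(𝔮)} τ`; `ι : τ → L_τ`, `t ↦ 1 ⊗ t`,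
    -- is `𝔨`-equivariant, `𝔭⁻` kills `ι(τ)`, and `(L, ι)` has the universal property
    -- `Hom_𝔤(L_τ, M) ≅ Hom_𝔮(τ, M)` characterizing the induced module:
    (L : Type (max u v)) [AddCommGroup L] [Module ℂ L] [LieRingModule 𝔤 L] [LieModule ℂ 𝔤 L]
    (ι : τ →ₗ[ℂ] L)
    (hιeq : ∀ (X : 𝔤) (hX : X ∈ 𝔨) (t : τ),
      ι ⟨⁅X, (t : V)⁆, hτstab X hX (t : V) t.2⟩ = ⁅X, ι t⁆)
    (hιann : ∀ Y ∈ 𝔭m, ∀ t : τ, ⁅Y, ι t⁆ = 0)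
    (huniv : ∀ (M : Type (max u v)) [AddCommGroup M] [Module ℂ M]
        [LieRingModule 𝔤 M] [LieModule ℂ 𝔤 M],
      ∀ f : τ →ₗ[ℂ] M,
        (∀ (X : 𝔤) (hX : X ∈ 𝔨) (t : τ),
          f ⟨⁅X, (t : V)⁆, hτstab X hX (t : V) t.2⟩ = ⁅X, f t⁆) →
        (∀ Y ∈ 𝔭m, ∀ t : τ, ⁅Y, f t⁆ = 0) →
        ∃! F : L →ₗ[ℂ] M, (∀ (X : 𝔤) (x : L), F ⁅X, x⁆ = ⁅X, F x⁆) ∧ F ∘ₗ ι = f)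
    -- (iv) `L_τ` is a semisimple `𝔨`-module (a sum of irreducible `𝔨`-submodules) ...
    (hss : ∃ (I : Type (max u v)) (C : I → Submodule ℂ L),
      (∀ i, (∀ X ∈ 𝔨, ∀ w ∈ C i, ⁅X, w⁆ ∈ C i) ∧ C i ≠ ⊥ ∧
        ∀ W ≤ C i, (∀ X ∈ 𝔨, ∀ w ∈ W, ⁅X, w⁆ ∈ W) → W = ⊥ ∨ W = C i) ∧
      iSup C = ⊤)
    -- ... and `dim_ℂ Hom_𝔨(τ, L_τ) = 1`:
    (hmult : ∃ f₀ : τ →ₗ[ℂ] L, f₀ ≠ 0 ∧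
      (∀ (X : 𝔤) (hX : X ∈ 𝔨) (t : τ),
        f₀ ⟨⁅X, (t : V)⁆, hτstab X hX (t : V) t.2⟩ = ⁅X, f₀ t⁆) ∧
      ∀ f : τ →ₗ[ℂ] L,
        (∀ (X : 𝔤) (hX : X ∈ 𝔨) (t : τ),
          f ⟨⁅X, (t : V)⁆, hτstab X hX (t : V) t.2⟩ = ⁅X, f t⁆) →
        ∃ c : ℂ, f = c • f₀) :
    -- conclusion: `V` is irreducible as a `𝔤`-module
    ∀ W : Submodule ℂ V, (∀ X : 𝔤, ∀ w ∈ W, ⁅X, w⁆ ∈ W) → W = ⊥ ∨ W = ⊤ :=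
  stmt_7_general 𝔨 𝔭m hkm hcompl v₀ hgen τ hv₀τ hτstab hτmin hann L ι huniv hss hmult
end
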